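/- Let m ≥ 1 and v ∈ W(S_{2m+1}) with v = (j,τ,T) via φ_{2m+1}. Then the Möbius function of the poset (W(S_{2m+1}), ≤) satisfies μ(e,v) = (−1)^{|T|} if τ = e and j = m+1, and μ(e,v) = 0 otherwise, where e denotes the identity permutation. In particular, for v = (τ,T) ∈ W(S_{2m}), μ(e,v) = (−1)^{|T|} if τ = e, and μ(e,v) = 0 otherwise. -/

import Mathlib

open Finset
open scoped Classical

namespace WachsPaper

/-! ### Type A (symmetric group) basics -/

/-- `w` is a permutation of `{1,…,n}` (it fixes everything outside `[1,n]`). -/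
def PermOn (n : ℕ) (w : Equiv.Perm ℕ) : Prop :=
  ∀ i : ℕ, i ∉ Finset.Icc 1 n → w i = i

/-- the involution `i ↦ i*` on `[n]`. -/
def star (n i : ℕ) : ℕ :=
  if i % 2 = 0 then i - 1 else if i + 1 ≤ n then i + 1 else n

/-- Wachs permutations of `S_n`. -/
def IsWachs (n : ℕ) (w : Equiv.Perm ℕ) : Prop :=
  PermOn n w ∧ ∀ i ∈ Finset.Icc 1 (n - 1),
    |(w⁻¹ i : ℤ) - (w⁻¹ (star n i) : ℤ)| ≤ 1

/-- the increasing rearrangement of `w(1),…,w(k)`. -/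
def sortedPrefix (w : ℕ → ℕ) (k : ℕ) : List ℕ :=
  Finset.sort ((Finset.Icc 1 k).image w) (· ≤ ·)

/-- Bruhat order on `S_n` via the tableau criterion. -/
def bruhatLE (n : ℕ) (u v : Equiv.Perm ℕ) : Prop :=
  ∀ k ∈ Finset.Icc 1 n, ∀ i : ℕ,
    (sortedPrefix (⇑u) k).getD i 0 ≤ (sortedPrefix (⇑v) k).getD i 0

def bruhatLT (n : ℕ) (u v : Equiv.Perm ℕ) : Prop :=
  bruhatLE n u v ∧ u ≠ v

/-- `v` covers `u` in the Bruhat order restricted to the set of permutations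
satisfying `A`. -/
def covInduced (n : ℕ) (A : Equiv.Perm ℕ → Prop) (u v : Equiv.Perm ℕ) : Prop :=
  A u ∧ A v ∧ bruhatLT n u v ∧
    ∀ z, A z → bruhatLT n u z → ¬ bruhatLT n z v

/-- number of inversions of `w` on `[1,n]` (Coxeter length on `S_n`). -/
def len (n : ℕ) (w : ℕ → ℕ) : ℕ :=
  (((Finset.Icc 1 n) ×ˢ (Finset.Icc 1 n)).filter
    (fun p => p.1 < p.2 ∧ w p.2 < w p.1)).card

/-- `v = φ_{2m}⁻¹(τ,T)`, i.e. `v` corresponds to the pair `(τ,T)` under `φ_{2m}`. -/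
def phiRel (m : ℕ) (τ : Equiv.Perm ℕ) (T : Finset ℕ) (v : Equiv.Perm ℕ) : Prop :=
  ∀ i ∈ Finset.Icc 1 m,
    if i ∈ T then v (2*i - 1) = 2 * τ i ∧ v (2*i) = 2 * τ i - 1
    else v (2*i - 1) = 2 * τ i - 1 ∧ v (2*i) = 2 * τ i

/-- position of the value `n` in `v`. -/
def pos (n : ℕ) (v : Equiv.Perm ℕ) : ℕ := v⁻¹ n

/-- `w = χ_n(v)`: `w` is obtained from `v` by deleting the value `n`. -/
def chiRel (n : ℕ) (v w : Equiv.Perm ℕ) : Prop :=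
  PermOn (n - 1) w ∧ ∀ k ∈ Finset.Icc 1 (n - 1),
    w k = if k < pos n v then v k else v (k + 1)

/-- `v = φ_{2m+1}⁻¹(i,τ,T)`. -/
def phiOddRel (m i : ℕ) (τ : Equiv.Perm ℕ) (T : Finset ℕ) (v : Equiv.Perm ℕ) : Prop :=
  pos (2*m+1) v = 2*i - 1 ∧ ∃ w : Equiv.Perm ℕ, chiRel (2*m+1) v w ∧ phiRel m τ T w

def chiVal (n : ℕ) (v : Equiv.Perm ℕ) (k : ℕ) : ℕ :=
  if k < pos n v then v k else v (k + 1)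

/-- the underlying permutation `f_n(v) ∈ S_{⌊n/2⌋}` of a Wachs permutation `v`,
as a function. -/
def fMap (n : ℕ) (v : Equiv.Perm ℕ) : ℕ → ℕ :=
  if n % 2 = 0 then fun i => (v (2*i - 1) + 1) / 2
  else fun i => (chiVal n v (2*i - 1) + 1) / 2

/-- `ℓ_W(v) = ℓ(v) - ℓ(f_n(v))`. -/
def lenW (n : ℕ) (v : Equiv.Perm ℕ) : ℕ := len n ⇑v - len (n / 2) (fMap n v)

def revFun (n i : ℕ) : ℕ := if 1 ≤ i ∧ i ≤ n then n + 1 - i else i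

lemma revFun_invol (n : ℕ) : Function.Involutive (revFun n) := by
  intro i; unfold revFun; split_ifs <;> omega

/-- the maximal element `n … 3 2 1` of `S_n`. -/
def rev (n : ℕ) : Equiv.Perm ℕ := (revFun_invol n).toPerm

/-- right weak order on `S_n`. -/
def weakLE (n : ℕ) (u v : Equiv.Perm ℕ) : Prop :=
  len n ⇑v = len n ⇑u + len n ⇑(u⁻¹ * v)

/-! ### Type B (hyperoctahedral group) basics -/

/-- membership in the window `[±n] = {-n,…,-1,1,…,n}`. -/
def inWindow (n : ℕ) (i : ℤ) : Prop :=
  (1 ≤ i ∧ i ≤ (n : ℤ)) ∨ (-(n : ℤ) ≤ i ∧ i ≤ -1)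

instance (n : ℕ) (i : ℤ) : Decidable (inWindow n i) := by
  unfold inWindow; infer_instance

/-- `w` is an element of the hyperoctahedral group `B_n`, viewed as a
permutation of `ℤ` with `w(-i) = -w(i)` fixing everything outside `[±n]`. -/
def PermOnB (n : ℕ) (w : Equiv.Perm ℤ) : Prop :=
  (∀ i : ℤ, w (-i) = - w i) ∧ ∀ i : ℤ, ¬ inWindow n i → w i = i

/-- signed Wachs permutations of `B_n`. -/
def IsSignedWachs (n : ℕ) (w : Equiv.Perm ℤ) : Prop :=
  PermOnB n w ∧ ∀ i ∈ Finset.Icc 1 (n - 1),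
    |w⁻¹ (i : ℤ) - w⁻¹ ((star n i : ℕ) : ℤ)| ≤ 1

noncomputable def sortedPrefixB (n : ℕ) (w : ℤ → ℤ) (k : ℤ) : List ℤ :=
  Finset.sort (((Finset.Icc (-(n : ℤ)) k).erase 0).image w) (· ≤ ·)

/-- Bruhat order on `B_n`, via the tableau criterion for the symmetric group
on `[±n]` under the natural embedding. -/
def bruhatLEB (n : ℕ) (u v : Equiv.Perm ℤ) : Prop :=
  ∀ k : ℤ, ∀ i : ℕ,
    (sortedPrefixB n (⇑u) k).getD i 0 ≤ (sortedPrefixB n (⇑v) k).getD i 0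

def bruhatLTB (n : ℕ) (u v : Equiv.Perm ℤ) : Prop := bruhatLEB n u v ∧ u ≠ v

def covInducedB (n : ℕ) (A : Equiv.Perm ℤ → Prop) (u v : Equiv.Perm ℤ) : Prop :=
  A u ∧ A v ∧ bruhatLTB n u v ∧ ∀ z, A z → bruhatLTB n u z → ¬ bruhatLTB n z v

noncomputable def invB (n : ℕ) (w : ℤ → ℤ) : ℕ :=
  (((Finset.Icc (1:ℤ) (n:ℤ)) ×ˢ (Finset.Icc (1:ℤ) (n:ℤ))).filter
    (fun p => p.1 < p.2 ∧ w p.2 < w p.1)).card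

noncomputable def negB (n : ℕ) (w : ℤ → ℤ) : ℕ :=
  ((Finset.Icc (1:ℤ) (n:ℤ)).filter (fun i => w i < 0)).card

noncomputable def nspB (n : ℕ) (w : ℤ → ℤ) : ℕ :=
  (((Finset.Icc (1:ℤ) (n:ℤ)) ×ˢ (Finset.Icc (1:ℤ) (n:ℤ))).filter
    (fun p => p.1 < p.2 ∧ w p.1 + w p.2 < 0)).card

/-- Coxeter length on `B_n`: `ℓ_B = inv + neg + nsp`. -/
noncomputable def lenB (n : ℕ) (w : ℤ → ℤ) : ℕ := invB n w + negB n w + nspB n w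

/-- indicator `χ(P) ∈ {0,1}`. -/
def chiZ (P : Prop) [Decidable P] : ℤ := if P then 1 else 0

/-- `v = φ⁻¹(σ,T)` for `B_{2m}`. -/
def phiBRel (m : ℕ) (σ : Equiv.Perm ℤ) (T : Finset ℕ) (v : Equiv.Perm ℤ) : Prop :=
  ∀ i ∈ Finset.Icc 1 m,
    if i ∈ T then
      v (2*(i:ℤ) - 1) = 2 * σ (i:ℤ) + chiZ (σ (i:ℤ) < 0) ∧
      v (2*(i:ℤ)) = 2 * σ (i:ℤ) - chiZ (0 < σ (i:ℤ))
    else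
      v (2*(i:ℤ) - 1) = 2 * σ (i:ℤ) - chiZ (0 < σ (i:ℤ)) ∧
      v (2*(i:ℤ)) = 2 * σ (i:ℤ) + chiZ (σ (i:ℤ) < 0)

/-- the signed reflection `(a,b)_B`. -/
def sgnRefl (a b : ℤ) : Equiv.Perm ℤ :=
  if a = -b then Equiv.swap a (-a) else Equiv.swap a b * Equiv.swap (-a) (-b)

/-- the coatom `c(v)` of Theorem 4.9. -/
def cB (m : ℕ) (v : Equiv.Perm ℤ) : Equiv.Perm ℤ :=
  if v⁻¹ (2*(m:ℤ)+1) = -1 then v * Equiv.swap (-1) 1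
  else if v (v⁻¹ (2*(m:ℤ)+1) + 2) < v (v⁻¹ (2*(m:ℤ)+1) + 1) then
    v * sgnRefl (v⁻¹ (2*(m:ℤ)+1) + 1) (v⁻¹ (2*(m:ℤ)+1) + 2)
  else v * sgnRefl (v⁻¹ (2*(m:ℤ)+1)) (v⁻¹ (2*(m:ℤ)+1) + 2)

/-- value of `v̄` (the element of `W(B_{2m})` obtained from `v ∈ W(B_{2m+1})` by
deleting the entries `±(2m+1)`) at a positive position `k`. -/
def barVal (m : ℕ) (v : Equiv.Perm ℤ) (k : ℤ) : ℤ :=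
  if k < |v⁻¹ (2*(m:ℤ)+1)| then v k else v (k + 1)

def toHalf (x : ℤ) : ℤ := if 0 < x then (x + 1) / 2 else -((-x + 1) / 2)

/-- the underlying signed permutation `σ ∈ B_{⌊n/2⌋}` of `v ∈ W(B_n)`, as a function. -/
def fMapB (n : ℕ) (v : Equiv.Perm ℤ) : ℤ → ℤ :=
  if n % 2 = 0 then fun i => toHalf (v (2*i - 1))
  else fun i => toHalf (barVal (n / 2) v (2*i - 1))

/-- `ℓ_W(v) = ℓ_B(v) - ℓ_B(σ)` for a signed Wachs permutation `v`. -/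
noncomputable def lenWB (n : ℕ) (v : Equiv.Perm ℤ) : ℕ := lenB n ⇑v - lenB (n / 2) (fMapB n v)

/-- `v = (j,σ,S)` for `v ∈ W(B_{2m+1})`. -/
def phiBOddRel (m : ℕ) (j : ℤ) (σ : Equiv.Perm ℤ) (S : Finset ℕ) (v : Equiv.Perm ℤ) : Prop :=
  (v⁻¹ (2*(m:ℤ)+1) = if 0 < j then 2*j - 1 else 2*j + 1) ∧
  ∃ w : Equiv.Perm ℤ, PermOnB (2*m) w ∧
    (∀ k ∈ Finset.Icc (1:ℤ) (2*(m:ℤ)), w k = barVal m v k) ∧ phiBRel m σ S w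

def w0BFun (n : ℕ) (i : ℤ) : ℤ := if inWindow n i then -i else i

lemma w0BFun_invol (n : ℕ) : Function.Involutive (w0BFun n) := by
  intro i; unfold w0BFun inWindow; split_ifs <;> omega

/-- the maximal element `[-1,-2,…,-n]` of `B_n`. -/
def w0B (n : ℕ) : Equiv.Perm ℤ := (w0BFun_invol n).toPerm

/-- right weak order on `B_n`. -/
def weakLEB (n : ℕ) (u v : Equiv.Perm ℤ) : Prop :=
  lenB n ⇑v = lenB n ⇑u + lenB n ⇑(u⁻¹ * v)


/-- lower bound for entries of a strictly sorted list. -/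
lemma getD_lb (a : ℕ) : ∀ (l : List ℕ), l.Pairwise (· < ·) → (∀ x ∈ l, a ≤ x) →
    ∀ i < l.length, a + i ≤ l.getD i 0 := by
  intro l
  induction l generalizing a with
  | nil => intro _ _ i hi; simp at hi
  | cons h t ih =>
    intro hs hmem i hi
    cases i with
    | zero => simpa using hmem h (by simp)
    | succ j =>
      have ht : t.Pairwise (· < ·) := hs.of_cons
      have hmem' : ∀ x ∈ t, h + 1 ≤ x := fun x hx =>
        (List.rel_of_pairwise_cons hs hx)
      have := ih (h + 1) ht hmem' j (by simpa using hi)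
      have hah : a ≤ h := hmem h (by simp)
      rw [List.getD_cons_succ]
      omega

/-- upper bound for entries of a strictly sorted list. -/
lemma getD_ub (b : ℕ) : ∀ (l : List ℕ), l.Pairwise (· < ·) → (∀ x ∈ l, x ≤ b) →
    ∀ i < l.length, l.getD i 0 + (l.length - 1 - i) ≤ b := by
  intro l
  induction l with
  | nil => intro _ _ i hi; simp at hi
  | cons h t ih =>
    intro hs hmem i hi
    have ht : t.Pairwise (· < ·) := hs.of_cons
    have hmem' : ∀ x ∈ t, x ≤ b := fun x hx => hmem x (List.mem_cons_of_mem _ hx)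
    cases i with
    | zero =>
      rcases t with _ | ⟨h', t'⟩
      · simpa using hmem h (by simp)
      · have h1 : h < h' := List.rel_of_pairwise_cons hs (by simp)
        have := ih ht hmem' 0 (by simp)
        simp only [List.getD_cons_zero] at this ⊢
        simp only [List.length_cons] at this ⊢
        omega
    | succ j =>
      have := ih ht hmem' j (by simpa using hi)
      simp only [List.getD_cons_succ, List.length_cons]
      omega

lemma mem_le_getD_last : ∀ (l : List ℕ), l.Pairwise (· ≤ ·) → ∀ x ∈ l,
    x ≤ l.getD (l.length - 1) 0 := by
  intro l
  induction l with
  | nil => simp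
  | cons h t ih =>
    intro hs x hx
    rcases t with _ | ⟨h', t'⟩
    · simp at hx; simp [hx]
    · have ht := hs.of_cons
      have hlen : (h' :: t').length - 1 < (h' :: t').length := by simp
      have hmem : (h' :: t').getD ((h' :: t').length - 1) 0 ∈ (h' :: t') := by
        rw [List.getD_eq_getElem _ _ hlen]; exact List.getElem_mem _
      rcases List.mem_cons.mp hx with rfl | hx'
      · have : x ≤ (h' :: t').getD ((h' :: t').length - 1) 0 :=
          List.rel_of_pairwise_cons hs hmem
        simpa [List.length_cons, List.getD_cons_succ] using this
      · have := ih ht x hx'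
        simpa [List.length_cons, List.getD_cons_succ] using this

lemma sort_insert_top (s : Finset ℕ) (a : ℕ) (h : ∀ b ∈ s, b < a) :
    (insert a s).sort (· ≤ ·) = s.sort (· ≤ ·) ++ [a] := by
  have ha : a ∉ s := fun hmem => lt_irrefl a (h a hmem)
  have hnd : (s.sort (· ≤ ·) ++ [a]).Nodup := by
    refine List.Nodup.append (Finset.sort_nodup _ _) (List.nodup_singleton a) ?_
    intro x hx hy
    simp only [List.mem_singleton] at hy; subst hy
    exact ne_of_lt (h x (by simpa using hx)) rfl
  have hsorted : (s.sort (· ≤ ·) ++ [a]).Pairwise (· ≤ ·) := by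
    rw [List.pairwise_append]
    refine ⟨Finset.pairwise_sort _ _, List.pairwise_singleton _ a, ?_⟩
    intro x hx y hy
    simp only [List.mem_singleton] at hy; subst hy
    exact le_of_lt (h x (by simpa using hx))
  have := (List.toFinset_sort (α := ℕ) (· ≤ ·) hnd).mpr hsorted
  rw [← this]
  congr 1
  ext x
  simp [or_comm]

section Part2

open Equiv

variable {n : ℕ} {u v : Equiv.Perm ℕ}

lemma permOn_mapsTo (hv : PermOn n v) : ∀ i ∈ Finset.Icc 1 n, v i ∈ Finset.Icc 1 n := by
  intro i hi
  by_contra h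
  have h2 := hv (v i) h
  have : v i = i := v.injective h2
  rw [this] at h
  exact h hi

lemma permOn_image_window (hv : PermOn n v) : (Finset.Icc 1 n).image v = Finset.Icc 1 n := by
  apply Finset.eq_of_subset_of_card_le
  · intro x hx
    obtain ⟨t, ht, rfl⟩ := Finset.mem_image.mp hx
    exact permOn_mapsTo hv t ht
  · rw [Finset.card_image_of_injective _ v.injective]

lemma length_sortedPrefix (v : Equiv.Perm ℕ) (k : ℕ) : (sortedPrefix ⇑v k).length = k := by
  unfold sortedPrefix
  rw [Finset.length_sort, Finset.card_image_of_injective _ v.injective, Nat.card_Icc]; omega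

lemma mem_sortedPrefix_ge_one (hv : PermOn n v) {k : ℕ} (hk : k ≤ n) :
    ∀ x ∈ sortedPrefix ⇑v k, 1 ≤ x := by
  intro x hx
  rw [sortedPrefix, Finset.mem_sort] at hx
  obtain ⟨t, ht, rfl⟩ := Finset.mem_image.mp hx
  have : t ∈ Finset.Icc 1 n := by
    rw [Finset.mem_Icc] at ht ⊢; omega
  have := permOn_mapsTo hv t this
  rw [Finset.mem_Icc] at this; omega

lemma getD_sortedPrefix_lb (hv : PermOn n v) {k j : ℕ} (hk : k ≤ n) (hj : j < k) :
    j + 1 ≤ (sortedPrefix ⇑v k).getD j 0 := by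
  have := getD_lb 1 (sortedPrefix ⇑v k) (List.sortedLT_iff_pairwise.mp (Finset.sortedLT_sort _))
    (mem_sortedPrefix_ge_one hv hk) j (by rw [length_sortedPrefix]; exact hj)
  omega

lemma getD_sort_Icc {k j : ℕ} (hj : j < k) :
    ((Finset.Icc 1 k).sort (· ≤ ·)).getD j 0 = j + 1 := by
  have hlen : ((Finset.Icc 1 k).sort (· ≤ ·)).length = k := by
    rw [Finset.length_sort, Nat.card_Icc]; omega
  have h1 := getD_lb 1 _ (List.sortedLT_iff_pairwise.mp (Finset.sortedLT_sort (Finset.Icc 1 k)))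
    (fun x hx => by rw [Finset.mem_sort, Finset.mem_Icc] at hx; omega) j (by omega)
  have h2 := getD_ub k _ (List.sortedLT_iff_pairwise.mp (Finset.sortedLT_sort (Finset.Icc 1 k)))
    (fun x hx => by rw [Finset.mem_sort, Finset.mem_Icc] at hx; omega) j (by omega)
  rw [hlen] at h2
  omega

lemma sortedPrefix_one (k : ℕ) :
    sortedPrefix ⇑(1 : Equiv.Perm ℕ) k = (Finset.Icc 1 k).sort (· ≤ ·) := by
  unfold sortedPrefix
  congr 1
  simp

lemma one_ble (hv : PermOn n v) : bruhatLE n 1 v := by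
  intro k hk j
  rw [Finset.mem_Icc] at hk
  rcases lt_or_ge j k with hj | hj
  · rw [sortedPrefix_one, getD_sort_Icc hj]
    exact getD_sortedPrefix_lb hv hk.2 hj
  · rw [List.getD_eq_default _ _ (by rw [length_sortedPrefix]; exact hj)]
    exact Nat.zero_le _

lemma ble_refl (v : Equiv.Perm ℕ) : bruhatLE n v v := fun _ _ _ => le_rfl

lemma ble_trans {w : Equiv.Perm ℕ} (h1 : bruhatLE n u v) (h2 : bruhatLE n v w) :
    bruhatLE n u w := fun k hk i => le_trans (h1 k hk i) (h2 k hk i)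

lemma image_eq_of_ble_ble (h1 : bruhatLE n u v) (h2 : bruhatLE n v u) :
    ∀ k ∈ Finset.Icc 1 n, (Finset.Icc 1 k).image ⇑u = (Finset.Icc 1 k).image ⇑v := by
  intro k hk
  have hlist : sortedPrefix ⇑u k = sortedPrefix ⇑v k := by
    apply List.ext_getElem (by rw [length_sortedPrefix, length_sortedPrefix])
    intro i hi1 hi2
    rw [← List.getD_eq_getElem _ 0 hi1, ← List.getD_eq_getElem _ 0 hi2]
    exact le_antisymm (h1 k hk i) (h2 k hk i)
  have := congrArg List.toFinset hlist
  rwa [sortedPrefix, sortedPrefix, Finset.sort_toFinset, Finset.sort_toFinset] at this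

lemma ble_antisymm (hu : PermOn n u) (hv : PermOn n v)
    (h1 : bruhatLE n u v) (h2 : bruhatLE n v u) : u = v := by
  have himg := image_eq_of_ble_ble h1 h2
  have hwin : ∀ k ∈ Finset.Icc 1 n, u k = v k := by
    intro k hk
    rw [Finset.mem_Icc] at hk
    have hA := himg k (Finset.mem_Icc.mpr hk)
    have hB : (Finset.Icc 1 (k-1)).image ⇑u = (Finset.Icc 1 (k-1)).image ⇑v := by
      rcases Nat.eq_or_lt_of_le hk.1 with h | h
      · simp [← h]
      · exact himg (k-1) (Finset.mem_Icc.mpr (by omega))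
    have hmem : u k ∈ (Finset.Icc 1 k).image ⇑v := by
      rw [← hA]; exact Finset.mem_image_of_mem _ (Finset.mem_Icc.mpr ⟨hk.1, le_rfl⟩)
    obtain ⟨t, ht, htv⟩ := Finset.mem_image.mp hmem
    rw [Finset.mem_Icc] at ht
    rcases Nat.eq_or_lt_of_le ht.2 with rfl | hlt
    · exact htv.symm
    · exfalso
      have : u k ∈ (Finset.Icc 1 (k-1)).image ⇑v := by
        rw [← htv]; exact Finset.mem_image_of_mem _ (Finset.mem_Icc.mpr (by omega))
      rw [← hB] at this
      obtain ⟨t', ht', ht'u⟩ := Finset.mem_image.mp this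
      have := u.injective ht'u
      rw [Finset.mem_Icc] at ht'
      omega
  apply Equiv.ext
  intro i
  by_cases hi : i ∈ Finset.Icc 1 n
  · exact hwin i hi
  · rw [hu i hi, hv i hi]

end Part2

section Part3

variable {n m' : ℕ}

lemma perm_inv_eq {z : Equiv.Perm ℕ} {a b : ℕ} (h : z b = a) : z⁻¹ a = b := by
  rw [← h]
  exact z.symm_apply_apply b

/-- underlying function of the "Boolean" permutation attached to `S`. -/
def blFun (m' : ℕ) (S : Finset ℕ) (i : ℕ) : ℕ :=
  if 1 ≤ i ∧ i ≤ 2*m' ∧ (i+1)/2 ∈ S then (if i % 2 = 1 then i + 1 else i - 1) else i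

lemma blFun_odd {S : Finset ℕ} {j m' : ℕ} (h1 : 1 ≤ j) (h2 : j ≤ m') :
    blFun m' S (2*j - 1) = if j ∈ S then 2*j else 2*j - 1 := by
  unfold blFun
  have hq : (2*j - 1 + 1)/2 = j := by omega
  rw [hq]
  by_cases hS : j ∈ S
  · rw [if_pos ⟨by omega, by omega, hS⟩, if_pos (by omega), if_pos hS]
    omega
  · rw [if_neg (fun h => hS h.2.2), if_neg hS]

lemma blFun_even {S : Finset ℕ} {j m' : ℕ} (h1 : 1 ≤ j) (h2 : j ≤ m') :
    blFun m' S (2*j) = if j ∈ S then 2*j - 1 else 2*j := by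
  unfold blFun
  have hq : (2*j + 1)/2 = j := by omega
  rw [hq]
  by_cases hS : j ∈ S
  · rw [if_pos ⟨by omega, by omega, hS⟩, if_neg (by omega), if_pos hS]
  · rw [if_neg (fun h => hS h.2.2), if_neg hS]

lemma blFun_fix {S : Finset ℕ} {i m' : ℕ} (h : i = 0 ∨ 2*m' < i) : blFun m' S i = i := by
  unfold blFun
  rw [if_neg (by omega)]

lemma blFun_invol (m' : ℕ) (S : Finset ℕ) : Function.Involutive (blFun m' S) := by
  intro i
  by_cases hwin : 1 ≤ i ∧ i ≤ 2*m'
  · set j := (i+1)/2 with hj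
    have hj1 : 1 ≤ j := by omega
    have hj2 : j ≤ m' := by omega
    by_cases hS : j ∈ S
    · rcases Nat.even_or_odd i with he | ho
      · have : i = 2*j := by rcases he with ⟨t, ht⟩; omega
        rw [this, blFun_even hj1 hj2, if_pos hS, blFun_odd hj1 hj2, if_pos hS]
      · have : i = 2*j - 1 := by rcases ho with ⟨t, ht⟩; omega
        rw [this, blFun_odd hj1 hj2, if_pos hS, blFun_even hj1 hj2, if_pos hS]
    · rcases Nat.even_or_odd i with he | ho
      · have : i = 2*j := by rcases he with ⟨t, ht⟩; omega
        rw [this, blFun_even hj1 hj2, if_neg hS, blFun_even hj1 hj2, if_neg hS]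
      · have : i = 2*j - 1 := by rcases ho with ⟨t, ht⟩; omega
        rw [this, blFun_odd hj1 hj2, if_neg hS, blFun_odd hj1 hj2, if_neg hS]
  · have h := blFun_fix (S := S) (m' := m') (i := i) (by omega)
    rw [h, h]

/-- the Boolean permutation `w_S`. -/
def wB (m' : ℕ) (S : Finset ℕ) : Equiv.Perm ℕ := (blFun_invol m' S).toPerm

lemma wB_apply (m' : ℕ) (S : Finset ℕ) (i : ℕ) : wB m' S i = blFun m' S i := rfl

lemma wB_apply_odd {S : Finset ℕ} {i : ℕ} (h1 : 1 ≤ i) (h2 : i ≤ m') :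
    wB m' S (2*i - 1) = if i ∈ S then 2*i else 2*i - 1 := by
  rw [wB_apply]; exact blFun_odd h1 h2

lemma wB_apply_even {S : Finset ℕ} {i : ℕ} (h1 : 1 ≤ i) (h2 : i ≤ m') :
    wB m' S (2*i) = if i ∈ S then 2*i - 1 else 2*i := by
  rw [wB_apply]; exact blFun_even h1 h2

lemma wB_fix {S : Finset ℕ} {i : ℕ} (h : i = 0 ∨ 2*m' < i) : wB m' S i = i := by
  rw [wB_apply]; exact blFun_fix h

lemma wB_empty (m' : ℕ) : wB m' (∅ : Finset ℕ) = 1 := by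
  apply Equiv.ext
  intro i
  rw [wB_apply]
  unfold blFun
  rw [if_neg (by simp)]
  rfl

lemma wB_permOn (hn : n = 2*m' ∨ n = 2*m' + 1) (S : Finset ℕ) : PermOn n (wB m' S) := by
  intro i hi
  rw [Finset.mem_Icc] at hi
  exact wB_fix (by omega)

/-- structural "Boolean" predicate. -/
def Bl (n m' : ℕ) (z : Equiv.Perm ℕ) : Prop :=
  PermOn n z ∧ ∀ i ∈ Finset.Icc 1 m',
    (z (2*i - 1) = 2*i - 1 ∧ z (2*i) = 2*i) ∨ (z (2*i - 1) = 2*i ∧ z (2*i) = 2*i - 1)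

/-- the set attached to a Boolean permutation. -/
def Sset (m' : ℕ) (z : Equiv.Perm ℕ) : Finset ℕ :=
  (Finset.Icc 1 m').filter (fun i => z (2*i - 1) = 2*i)

lemma Sset_subset (m' : ℕ) (z : Equiv.Perm ℕ) : Sset m' z ⊆ Finset.Icc 1 m' :=
  Finset.filter_subset _ _

lemma Bl_wB (hn : n = 2*m' ∨ n = 2*m' + 1) (S : Finset ℕ) : Bl n m' (wB m' S) := by
  refine ⟨wB_permOn hn S, ?_⟩
  intro i hi
  rw [Finset.mem_Icc] at hi
  rw [wB_apply_odd hi.1 hi.2, wB_apply_even hi.1 hi.2]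
  by_cases hS : i ∈ S
  · right; rw [if_pos hS, if_pos hS]; exact ⟨rfl, rfl⟩
  · left; rw [if_neg hS, if_neg hS]; exact ⟨rfl, rfl⟩

lemma Sset_wB (hS : S ⊆ Finset.Icc 1 m') : Sset m' (wB m' S) = S := by
  ext i
  rw [Sset, Finset.mem_filter]
  constructor
  · rintro ⟨hi, h⟩
    rw [Finset.mem_Icc] at hi
    rw [wB_apply_odd hi.1 hi.2] at h
    by_contra hc
    rw [if_neg hc] at h
    omega
  · intro hi
    have hi' := hS hi
    refine ⟨hi', ?_⟩
    rw [Finset.mem_Icc] at hi'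
    rw [wB_apply_odd hi'.1 hi'.2, if_pos hi]

lemma wB_inj {S T : Finset ℕ} (hS : S ⊆ Finset.Icc 1 m') (hT : T ⊆ Finset.Icc 1 m')
    (h : wB m' S = wB m' T) : S = T := by
  rw [← Sset_wB hS, ← Sset_wB hT, h]

/-- image of an even prefix under a Boolean-structured permutation. -/
lemma Bl_image_even {z : Equiv.Perm ℕ} (hz : Bl n m' z) :
    ∀ i, i ≤ m' → (Finset.Icc 1 (2*i)).image ⇑z = Finset.Icc 1 (2*i) := by
  intro i
  induction i with
  | zero => intro _; simp
  | succ i ih =>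
    intro hi
    have hrec := ih (by omega)
    have hblock := hz.2 (i+1) (Finset.mem_Icc.mpr ⟨by omega, hi⟩)
    have hsplit : Finset.Icc 1 (2*(i+1)) =
        insert (2*(i+1)) (insert (2*(i+1) - 1) (Finset.Icc 1 (2*i))) := by
      ext x
      simp only [Finset.mem_insert, Finset.mem_Icc]
      omega
    rw [hsplit, Finset.image_insert, Finset.image_insert, hrec]
    rcases hblock with ⟨h1, h2⟩ | ⟨h1, h2⟩
    · rw [h1, h2]
    · rw [h1, h2]
      ext x
      simp only [Finset.mem_insert, Finset.mem_Icc]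
      omega

lemma Bl_image_odd {z : Equiv.Perm ℕ} (hz : Bl n m' z) {i : ℕ} (h1 : 1 ≤ i) (h2 : i ≤ m') :
    (Finset.Icc 1 (2*i - 1)).image ⇑z = insert (z (2*i - 1)) (Finset.Icc 1 (2*i - 2)) := by
  have hrec : (Finset.Icc 1 (2*i - 2)).image ⇑z = Finset.Icc 1 (2*i - 2) := by
    have := Bl_image_even hz (i-1) (by omega)
    rwa [show 2*(i-1) = 2*i - 2 by omega] at this
  have hsplit : Finset.Icc 1 (2*i - 1) = insert (2*i - 1) (Finset.Icc 1 (2*i - 2)) := by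
    ext x
    simp only [Finset.mem_insert, Finset.mem_Icc]
    omega
  rw [hsplit, Finset.image_insert, hrec]

lemma Bl_eq_wB {z : Equiv.Perm ℕ} (hn : n = 2*m' ∨ n = 2*m' + 1) (hz : Bl n m' z) :
    z = wB m' (Sset m' z) := by
  have htop : n = 2*m' + 1 → z n = n := by
    intro hodd
    have himg := Bl_image_even hz m' le_rfl
    have hmem : z n ∈ Finset.Icc 1 n := permOn_mapsTo hz.1 n (Finset.mem_Icc.mpr ⟨by omega, le_rfl⟩)
    have hnot : z n ∉ Finset.Icc 1 (2*m') := by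
      intro hc
      rw [← himg] at hc
      obtain ⟨t, ht, htz⟩ := Finset.mem_image.mp hc
      have := z.injective htz
      rw [Finset.mem_Icc] at ht
      omega
    rw [Finset.mem_Icc] at hmem hnot
    omega
  apply Equiv.ext
  intro i
  by_cases hwin : 1 ≤ i ∧ i ≤ 2*m'
  · set j := (i+1)/2 with hj
    have hj1 : 1 ≤ j := by omega
    have hj2 : j ≤ m' := by omega
    have hblock := hz.2 j (Finset.mem_Icc.mpr ⟨hj1, hj2⟩)
    have hSmem : j ∈ Sset m' z ↔ z (2*j - 1) = 2*j := by
      rw [Sset, Finset.mem_filter]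
      exact ⟨fun h => h.2, fun h => ⟨Finset.mem_Icc.mpr ⟨hj1, hj2⟩, h⟩⟩
    rcases Nat.even_or_odd i with he | ho
    · have hi2j : i = 2*j := by obtain ⟨t, ht⟩ := he; omega
      rw [hi2j, wB_apply_even hj1 hj2]
      rcases hblock with ⟨h1, h2⟩ | ⟨h1, h2⟩
      · rw [h2, if_neg (by rw [hSmem, h1]; omega)]
      · rw [h2, if_pos (hSmem.mpr h1)]
    · have hi2j : i = 2*j - 1 := by obtain ⟨t, ht⟩ := ho; omega
      rw [hi2j, wB_apply_odd hj1 hj2]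
      rcases hblock with ⟨h1, h2⟩ | ⟨h1, h2⟩
      · rw [h1, if_neg (by rw [hSmem, h1]; omega)]
      · rw [h1, if_pos (hSmem.mpr h1)]
  · rcases hn with rfl | rfl
    · rw [hz.1 i (by rw [Finset.mem_Icc]; omega), wB_fix (by omega)]
    · by_cases hi : i = 2*m' + 1
      · rw [hi, htop rfl, wB_fix (by omega)]
      · rw [hz.1 i (by rw [Finset.mem_Icc]; omega), wB_fix (by omega)]

lemma Bl_isWachs {z : Equiv.Perm ℕ} (hn : n = 2*m' ∨ n = 2*m' + 1)
    (hz : Bl n m' z) : IsWachs n z := by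
  refine ⟨hz.1, ?_⟩
  intro i hi
  rw [Finset.mem_Icc] at hi
  set j := (i+1)/2 with hj
  have hj1 : 1 ≤ j := by omega
  have hj2 : j ≤ m' := by omega
  have hblock := hz.2 j (Finset.mem_Icc.mpr ⟨hj1, hj2⟩)
  have hstar : star n i = if i % 2 = 0 then i - 1 else i + 1 := by
    unfold star
    by_cases h : i % 2 = 0
    · rw [if_pos h, if_pos h]
    · rw [if_neg h, if_neg h, if_pos (by omega)]
  have hinv : z⁻¹ (2*j - 1) = 2*j - 1 ∧ z⁻¹ (2*j) = 2*j ∨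
      z⁻¹ (2*j - 1) = 2*j ∧ z⁻¹ (2*j) = 2*j - 1 := by
    rcases hblock with ⟨h1, h2⟩ | ⟨h1, h2⟩
    · exact Or.inl ⟨perm_inv_eq h1, perm_inv_eq h2⟩
    · exact Or.inr ⟨perm_inv_eq h2, perm_inv_eq h1⟩
  rcases Nat.even_or_odd i with he | ho
  · have hi2j : i = 2*j := by obtain ⟨t, ht⟩ := he; omega
    have hs : star n i = 2*j - 1 := by rw [hstar, if_pos (by omega)]; omega
    rw [hs, hi2j]
    rcases hinv with ⟨h1, h2⟩ | ⟨h1, h2⟩ <;> rw [h1, h2] <;>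
      · rw [abs_le]; constructor <;> [push_cast; push_cast] <;> omega
  · have hi2j : i = 2*j - 1 := by obtain ⟨t, ht⟩ := ho; omega
    have hs : star n i = 2*j := by rw [hstar, if_neg (by obtain ⟨t, ht⟩ := ho; omega)]; omega
    rw [hs, hi2j]
    rcases hinv with ⟨h1, h2⟩ | ⟨h1, h2⟩ <;> rw [h1, h2] <;>
      · rw [abs_le]; constructor <;> [push_cast; push_cast] <;> omega

end Part3

section Part4

variable {n m' : ℕ} {v z : Equiv.Perm ℕ} {S T : Finset ℕ}

lemma sortedPrefix_of_image_Icc {k : ℕ} (h : (Finset.Icc 1 k).image ⇑v = Finset.Icc 1 k) :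
    sortedPrefix ⇑v k = (Finset.Icc 1 k).sort (· ≤ ·) := by
  unfold sortedPrefix
  rw [h]

lemma insert_absorb_Icc {i : ℕ} (h : 1 ≤ i) :
    insert (2*i - 1) (Finset.Icc 1 (2*i - 2)) = Finset.Icc 1 (2*i - 1) := by
  ext x
  simp only [Finset.mem_insert, Finset.mem_Icc]
  omega

lemma sortedPrefix_Bl_odd_mem (hn : n = 2*m' ∨ n = 2*m' + 1) (hz : Bl n m' z) {i : ℕ}
    (h1 : 1 ≤ i) (h2 : i ≤ m') (hS : z (2*i - 1) = 2*i) :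
    sortedPrefix ⇑z (2*i - 1) = (Finset.Icc 1 (2*i - 2)).sort (· ≤ ·) ++ [2*i] := by
  unfold sortedPrefix
  rw [Bl_image_odd hz h1 h2, hS]
  exact sort_insert_top _ _ (fun b hb => by rw [Finset.mem_Icc] at hb; omega)

lemma getD_pref2_last {t a : ℕ} :
    ((Finset.Icc 1 t).sort (· ≤ ·) ++ [a]).getD t 0 = a := by
  have hlen : ((Finset.Icc 1 t).sort (· ≤ ·)).length = t := by
    rw [Finset.length_sort, Nat.card_Icc]; omega
  rw [List.getD_append_right _ _ _ _ (by omega), hlen]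
  simp

lemma getD_pref2_lt {t a j : ℕ} (hj : j < t) :
    ((Finset.Icc 1 t).sort (· ≤ ·) ++ [a]).getD j 0 = j + 1 := by
  have hlen : ((Finset.Icc 1 t).sort (· ≤ ·)).length = t := by
    rw [Finset.length_sort, Nat.card_Icc]; omega
  rw [List.getD_append _ _ _ _ (by omega)]
  exact getD_sort_Icc hj

/-- the set of indices `i` with `w_{{i}} ≤ v`. -/
def Dset (n m' : ℕ) (v : Equiv.Perm ℕ) : Finset ℕ :=
  (Finset.Icc 1 m').filter (fun i => 2*i ≤ (sortedPrefix ⇑v (2*i - 1)).getD (2*i - 2) 0)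

lemma Dset_subset (n m' : ℕ) (v : Equiv.Perm ℕ) : Dset n m' v ⊆ Finset.Icc 1 m' :=
  Finset.filter_subset _ _

lemma wB_le_iff (hn : n = 2*m' ∨ n = 2*m' + 1) (hv : PermOn n v)
    (hS : S ⊆ Finset.Icc 1 m') :
    bruhatLE n (wB m' S) v ↔ S ⊆ Dset n m' v := by
  constructor
  · intro h i hi
    have hi' := hS hi
    rw [Finset.mem_Icc] at hi'
    have hk : 2*i - 1 ∈ Finset.Icc 1 n := by rw [Finset.mem_Icc]; omega
    have := h (2*i - 1) hk (2*i - 2)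
    have hval : wB m' S (2*i - 1) = 2*i := by
      rw [wB_apply_odd hi'.1 hi'.2, if_pos hi]
    rw [sortedPrefix_Bl_odd_mem hn (Bl_wB hn S) hi'.1 hi'.2 hval] at this
    rw [show 2*i - 2 = 2*i - 1 - 1 by omega] at this
    rw [getD_pref2_last (t := 2*i - 1 - 1)] at this
    rw [Dset, Finset.mem_filter]
    exact ⟨hS hi, by rw [show 2*i - 2 = 2*i - 1 - 1 by omega]; exact this⟩
  · intro hD k hk j
    rw [Finset.mem_Icc] at hk
    have hlen : (sortedPrefix ⇑(wB m' S) k).length = k := length_sortedPrefix _ _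
    rcases lt_or_ge j k with hj | hj
    · by_cases hpar : k % 2 = 0
      · -- even prefix
        have hi2 : k = 2*(k/2) := by omega
        have himg : (Finset.Icc 1 k).image ⇑(wB m' S) = Finset.Icc 1 k := by
          rw [hi2]; exact Bl_image_even (Bl_wB hn S) (k/2) (by omega)
        rw [sortedPrefix_of_image_Icc himg, getD_sort_Icc hj]
        exact getD_sortedPrefix_lb hv hk.2 hj
      · by_cases hfull : k = 2*m' + 1
        · have hodd : n = 2*m' + 1 := by omega
          have himg : (Finset.Icc 1 k).image ⇑(wB m' S) = Finset.Icc 1 k := by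
            rw [hfull, ← hodd]; exact permOn_image_window (wB_permOn hn S)
          rw [sortedPrefix_of_image_Icc himg, getD_sort_Icc hj]
          exact getD_sortedPrefix_lb hv hk.2 hj
        · set i := (k+1)/2 with hidef
          have hi1 : 1 ≤ i := by omega
          have hi2 : i ≤ m' := by omega
          have hk2i : k = 2*i - 1 := by omega
          by_cases hmem : i ∈ S
          · have hval : wB m' S (2*i - 1) = 2*i := by
              rw [wB_apply_odd hi1 hi2, if_pos hmem]
            rw [hk2i, sortedPrefix_Bl_odd_mem hn (Bl_wB hn S) hi1 hi2 hval]
            rcases lt_or_ge j (2*i - 2) with hj2 | hj2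
            · rw [getD_pref2_lt hj2]
              exact getD_sortedPrefix_lb hv (by omega) (by omega)
            · have hjeq : j = 2*i - 2 := by omega
              subst hjeq
              rw [show (2*i - 2 : ℕ) = 2*i - 1 - 1 by omega, getD_pref2_last]
              have := hD hmem
              rw [Dset, Finset.mem_filter] at this
              rw [show (2*i - 1 - 1 : ℕ) = 2*i - 2 by omega]
              exact this.2
          · have hval : wB m' S (2*i - 1) = 2*i - 1 := by
              rw [wB_apply_odd hi1 hi2, if_neg hmem]
            have himg : (Finset.Icc 1 k).image ⇑(wB m' S) = Finset.Icc 1 k := by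
              rw [hk2i, Bl_image_odd (Bl_wB hn S) hi1 hi2, hval, insert_absorb_Icc hi1]
            rw [sortedPrefix_of_image_Icc himg, getD_sort_Icc hj]
            exact getD_sortedPrefix_lb hv hk.2 hj
    · rw [List.getD_eq_default _ _ (by omega)]
      exact Nat.zero_le _

lemma Dset_wB (hn : n = 2*m' ∨ n = 2*m' + 1) (hT : T ⊆ Finset.Icc 1 m') :
    Dset n m' (wB m' T) = T := by
  ext i
  rw [Dset, Finset.mem_filter]
  constructor
  · rintro ⟨hi, hD⟩
    rw [Finset.mem_Icc] at hi
    by_contra hmem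
    have hval : wB m' T (2*i - 1) = 2*i - 1 := by
      rw [wB_apply_odd hi.1 hi.2, if_neg hmem]
    rw [sortedPrefix_of_image_Icc (by
      rw [Bl_image_odd (Bl_wB hn T) hi.1 hi.2, hval, insert_absorb_Icc hi.1])] at hD
    rw [getD_sort_Icc (by omega)] at hD
    omega
  · intro hi
    have hi' := hT hi
    rw [Finset.mem_Icc] at hi'
    refine ⟨Finset.mem_Icc.mpr hi', ?_⟩
    have hval : wB m' T (2*i - 1) = 2*i := by
      rw [wB_apply_odd hi'.1 hi'.2, if_pos hi]
    rw [sortedPrefix_Bl_odd_mem hn (Bl_wB hn T) hi'.1 hi'.2 hval,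
      show (2*i - 2 : ℕ) = 2*i - 1 - 1 by omega, getD_pref2_last]

lemma le_wB (hn : n = 2*m' ∨ n = 2*m' + 1) (hz : PermOn n z)
    (hT : T ⊆ Finset.Icc 1 m') (h : bruhatLE n z (wB m' T)) :
    Bl n m' z ∧ Sset m' z ⊆ T := by
  have heven : ∀ i, i ≤ m' → (Finset.Icc 1 (2*i)).image ⇑z = Finset.Icc 1 (2*i) := by
    intro i hi
    rcases Nat.eq_zero_or_pos i with rfl | hipos
    · simp
    have hk : 2*i ∈ Finset.Icc 1 n := by rw [Finset.mem_Icc]; omega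
    have himgT : (Finset.Icc 1 (2*i)).image ⇑(wB m' T) = Finset.Icc 1 (2*i) :=
      Bl_image_even (Bl_wB hn T) i hi
    have hlist : sortedPrefix ⇑z (2*i) = (Finset.Icc 1 (2*i)).sort (· ≤ ·) := by
      apply List.ext_getElem
      · rw [length_sortedPrefix, Finset.length_sort, Nat.card_Icc]; omega
      · intro j hj1 hj2
        rw [length_sortedPrefix] at hj1
        rw [← List.getD_eq_getElem _ 0 (by assumption), ← List.getD_eq_getElem _ 0 (by assumption)]
        have hub := h (2*i) hk j
        rw [sortedPrefix_of_image_Icc himgT, getD_sort_Icc hj1] at hub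
        have hlb := getD_sortedPrefix_lb hz (by rw [Finset.mem_Icc] at hk; exact hk.2) hj1
        rw [getD_sort_Icc hj1]
        omega
    have := congrArg List.toFinset hlist
    rwa [sortedPrefix, Finset.sort_toFinset, Finset.sort_toFinset] at this
  have hBl : Bl n m' z := by
    refine ⟨hz, ?_⟩
    intro i hi
    rw [Finset.mem_Icc] at hi
    have hA := heven i hi.2
    have hB : (Finset.Icc 1 (2*i - 2)).image ⇑z = Finset.Icc 1 (2*i - 2) := by
      have := heven (i-1) (by omega)
      rwa [show 2*(i-1) = 2*i - 2 by omega] at this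
    have hmem1 : z (2*i - 1) ∈ Finset.Icc 1 (2*i) := by
      rw [← hA]; exact Finset.mem_image_of_mem _ (Finset.mem_Icc.mpr ⟨by omega, by omega⟩)
    have hmem2 : z (2*i) ∈ Finset.Icc 1 (2*i) := by
      rw [← hA]; exact Finset.mem_image_of_mem _ (Finset.mem_Icc.mpr ⟨by omega, by omega⟩)
    have hnot1 : z (2*i - 1) ∉ Finset.Icc 1 (2*i - 2) := by
      intro hc
      rw [← hB] at hc
      obtain ⟨t, ht, htz⟩ := Finset.mem_image.mp hc
      have := z.injective htz
      rw [Finset.mem_Icc] at ht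
      omega
    have hnot2 : z (2*i) ∉ Finset.Icc 1 (2*i - 2) := by
      intro hc
      rw [← hB] at hc
      obtain ⟨t, ht, htz⟩ := Finset.mem_image.mp hc
      have := z.injective htz
      rw [Finset.mem_Icc] at ht
      omega
    have hne : z (2*i - 1) ≠ z (2*i) := fun hc => by
      have := z.injective hc; omega
    rw [Finset.mem_Icc] at hmem1 hmem2 hnot1 hnot2
    omega
  refine ⟨hBl, ?_⟩
  intro i hi
  rw [Sset, Finset.mem_filter] at hi
  obtain ⟨hi1, hival⟩ := hi
  rw [Finset.mem_Icc] at hi1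
  by_contra hmem
  have hub := h (2*i - 1) (Finset.mem_Icc.mpr ⟨by omega, by omega⟩) (2*i - 2)
  rw [sortedPrefix_Bl_odd_mem hn hBl hi1.1 hi1.2 hival,
    show (2*i - 2 : ℕ) = 2*i - 1 - 1 by omega, getD_pref2_last] at hub
  have hvalT : wB m' T (2*i - 1) = 2*i - 1 := by
    rw [wB_apply_odd hi1.1 hi1.2, if_neg hmem]
  rw [sortedPrefix_of_image_Icc (by
    rw [Bl_image_odd (Bl_wB hn T) hi1.1 hi1.2, hvalT, insert_absorb_Icc hi1.1]),
    getD_sort_Icc (by omega)] at hub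
  omega

lemma Dset_nonempty (hn : n = 2*m' ∨ n = 2*m' + 1) (hm : 1 ≤ m') (hv : IsWachs n v)
    (hne : v ≠ 1) : (Dset n m' v).Nonempty := by
  rw [Finset.nonempty_iff_ne_empty]
  intro hD
  apply hne
  have hDe : ∀ i, 1 ≤ i → i ≤ m' →
      (sortedPrefix ⇑v (2*i - 1)).getD (2*i - 2) 0 ≤ 2*i - 1 := by
    intro i h1 h2
    by_contra hc
    have : i ∈ Dset n m' v := by
      rw [Dset, Finset.mem_filter]
      exact ⟨Finset.mem_Icc.mpr ⟨h1, h2⟩, by omega⟩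
    rw [hD] at this
    exact absurd this (Finset.notMem_empty i)
  have himg : ∀ i, 1 ≤ i → i ≤ m' →
      (Finset.Icc 1 (2*i - 1)).image ⇑v = Finset.Icc 1 (2*i - 1) := by
    intro i h1 h2
    have hcard : ((Finset.Icc 1 (2*i - 1)).image ⇑v).card = 2*i - 1 := by
      rw [Finset.card_image_of_injective _ v.injective, Nat.card_Icc]; omega
    have hlen : (sortedPrefix ⇑v (2*i - 1)).length = 2*i - 1 := length_sortedPrefix _ _
    apply Finset.eq_of_subset_of_card_le
    · intro x hx
      have hxmem : x ∈ sortedPrefix ⇑v (2*i - 1) := by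
        rw [sortedPrefix, Finset.mem_sort]; exact hx
      have hub : x ≤ (sortedPrefix ⇑v (2*i - 1)).getD ((sortedPrefix ⇑v (2*i - 1)).length - 1) 0 :=
        mem_le_getD_last _ (Finset.pairwise_sort _ _) x hxmem
      rw [hlen, show (2*i - 1 - 1 : ℕ) = 2*i - 2 by omega] at hub
      have := hDe i h1 h2
      have hge := mem_sortedPrefix_ge_one hv.1 (by omega : 2*i - 1 ≤ n) x hxmem
      rw [Finset.mem_Icc]
      omega
    · rw [hcard, Nat.card_Icc]; omega
  have hnotmem : ∀ (a t : ℕ), (Finset.Icc 1 t).image ⇑v = Finset.Icc 1 t → t < a →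
      v a ∉ Finset.Icc 1 t := by
    intro a t himg' hlt hc
    rw [← himg'] at hc
    obtain ⟨s, hs, hsv⟩ := Finset.mem_image.mp hc
    have := v.injective hsv
    rw [Finset.mem_Icc] at hs
    omega
  have hstar : ∀ i, 1 ≤ i → 2*i ≤ n → star n (2*i - 1) = 2*i := by
    intro i h1 h2
    unfold star
    rw [if_neg (by omega), if_pos (by omega)]
    omega
  have hswapban : ∀ i, 1 ≤ i → i ≤ m' → 2*i ≤ n → v (2*i + 1) = 2*i → False := by
    intro i h1 h2 h3 hvv
    have hinv2i : v⁻¹ (2*i) = 2*i + 1 := perm_inv_eq hvv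
    have hprev : v⁻¹ (2*i - 1) ≤ 2*i - 1 := by
      have hmem : (2*i - 1) ∈ (Finset.Icc 1 (2*i - 1)).image ⇑v := by
        rw [himg i h1 h2, Finset.mem_Icc]; omega
      obtain ⟨t, ht, htv⟩ := Finset.mem_image.mp hmem
      rw [perm_inv_eq htv]
      rw [Finset.mem_Icc] at ht
      exact ht.2
    have hw := hv.2 (2*i - 1) (Finset.mem_Icc.mpr ⟨by omega, by omega⟩)
    rw [hstar i h1 h3, hinv2i, abs_le] at hw
    have := hw.1
    have := hw.2
    omega
  have h1fix : v 1 = 1 := by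
    have := himg 1 (le_refl 1) hm
    rw [show 2*1 - 1 = 1 by omega] at this
    have h1m : v 1 ∈ (Finset.Icc 1 1).image ⇑v :=
      Finset.mem_image_of_mem _ (by rw [Finset.mem_Icc]; omega)
    rw [this, Finset.mem_Icc] at h1m
    omega
  have pairfix : ∀ i, 1 ≤ i → i + 1 ≤ m' → v (2*i) = 2*i ∧ v (2*i+1) = 2*i+1 := by
    intro i h1 h2
    have hA : (Finset.Icc 1 (2*i + 1)).image ⇑v = Finset.Icc 1 (2*i + 1) := by
      have := himg (i+1) (by omega) h2
      rwa [show 2*(i+1) - 1 = 2*i + 1 by omega] at this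
    have hB := himg i h1 (by omega)
    have hm1 : v (2*i) ∈ Finset.Icc 1 (2*i + 1) := by
      rw [← hA]; exact Finset.mem_image_of_mem _ (Finset.mem_Icc.mpr ⟨by omega, by omega⟩)
    have hm2 : v (2*i + 1) ∈ Finset.Icc 1 (2*i + 1) := by
      rw [← hA]; exact Finset.mem_image_of_mem _ (Finset.mem_Icc.mpr ⟨by omega, by omega⟩)
    have hn1 := hnotmem (2*i) (2*i - 1) hB (by omega)
    have hn2 := hnotmem (2*i + 1) (2*i - 1) hB (by omega)
    have hne : v (2*i) ≠ v (2*i + 1) := fun hc => by have := v.injective hc; omega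
    rw [Finset.mem_Icc] at hm1 hm2 hn1 hn2
    by_cases hsw : v (2*i + 1) = 2*i
    · exact absurd (hswapban i h1 (by omega) (by omega) hsw) (fun h => h)
    · omega
  have tailfix : ∀ i, 2*m' ≤ i → i ≤ n → v i = i := by
    intro i hi1 hi2
    have hB := himg m' hm le_rfl
    rcases hn with hne2 | hno
    · have hieq : i = 2*m' := by omega
      have hm1 : v i ∈ Finset.Icc 1 n := permOn_mapsTo hv.1 i (Finset.mem_Icc.mpr (by omega))
      have hn1 := hnotmem i (2*m' - 1) hB (by omega)
      rw [Finset.mem_Icc] at hm1 hn1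
      omega
    · have hm1 : v (2*m') ∈ Finset.Icc 1 n := permOn_mapsTo hv.1 _ (Finset.mem_Icc.mpr (by omega))
      have hm2 : v (2*m'+1) ∈ Finset.Icc 1 n := permOn_mapsTo hv.1 _ (Finset.mem_Icc.mpr (by omega))
      have hn1 := hnotmem (2*m') (2*m' - 1) hB (by omega)
      have hn2 := hnotmem (2*m' + 1) (2*m' - 1) hB (by omega)
      have hne : v (2*m') ≠ v (2*m' + 1) := fun hc => by have := v.injective hc; omega
      rw [Finset.mem_Icc] at hm1 hm2 hn1 hn2
      have hnsw : v (2*m' + 1) ≠ 2*m' := fun hsw =>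
        hswapban m' hm le_rfl (by omega) hsw
      have hieq : i = 2*m' ∨ i = 2*m' + 1 := by omega
      rcases hieq with rfl | rfl
      · omega
      · omega
  apply Equiv.ext
  intro i
  have hone : (1 : Equiv.Perm ℕ) i = i := rfl
  rw [hone]
  by_cases hwin : 1 ≤ i ∧ i ≤ n
  · rcases Nat.lt_or_ge i (2*m') with hlt | hge
    · rcases Nat.eq_or_lt_of_le hwin.1 with h1 | h1
      · rw [← h1]; exact h1fix
      · set j := i/2 with hj
        have hj1 : 1 ≤ j := by omega
        have hj2 : j + 1 ≤ m' := by omega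
        have := pairfix j hj1 hj2
        rcases Nat.even_or_odd i with he | ho
        · obtain ⟨t, ht⟩ := he
          rw [show i = 2*j by omega]
          exact this.1
        · obtain ⟨t, ht⟩ := ho
          rw [show i = 2*j + 1 by omega]
          exact this.2
    · exact tailfix i hge hwin.2
  · exact hv.1 i (by rw [Finset.mem_Icc]; omega)

end Part4

section Part5

variable {n m' : ℕ} {v z : Equiv.Perm ℕ}

lemma finite_permOn (n : ℕ) : {w : Equiv.Perm ℕ | PermOn n w}.Finite := by
  have hinj : Function.Injective
      (fun w : {w : Equiv.Perm ℕ | PermOn n w} =>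
        (fun i : (Finset.Icc 1 n : Finset ℕ) =>
          (⟨w.1 i.1, permOn_mapsTo w.2 i.1 i.2⟩ : (Finset.Icc 1 n : Finset ℕ)))) := by
    intro w w' h
    apply Subtype.ext
    apply Equiv.ext
    intro i
    by_cases hi : i ∈ Finset.Icc 1 n
    · have := congrFun h ⟨i, hi⟩
      simpa [Subtype.ext_iff] using this
    · rw [w.2 i hi, w'.2 i hi]
  have : Finite {w : Equiv.Perm ℕ | PermOn n w} := Finite.of_injective _ hinj
  exact Set.finite_coe_iff.mpr this

lemma one_permOn (n : ℕ) : PermOn n (1 : Equiv.Perm ℕ) := fun _ _ => rfl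

lemma one_isWachs (n : ℕ) : IsWachs n (1 : Equiv.Perm ℕ) := by
  refine ⟨one_permOn n, ?_⟩
  intro i hi
  rw [Finset.mem_Icc] at hi
  have h1 : ((1 : Equiv.Perm ℕ)⁻¹ : Equiv.Perm ℕ) = 1 := inv_one
  rw [h1]
  have h2 : ∀ a : ℕ, (1 : Equiv.Perm ℕ) a = a := fun _ => rfl
  rw [h2, h2]
  unfold star
  by_cases hp : i % 2 = 0
  · rw [if_pos hp]
    rw [abs_le]
    constructor <;> push_cast <;> omega
  · rw [if_neg hp, if_pos (by omega)]
    rw [abs_le]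
    constructor <;> push_cast <;> omega

lemma Bl_one (hn : n = 2*m' ∨ n = 2*m' + 1) : Bl n m' (1 : Equiv.Perm ℕ) :=
  ⟨one_permOn n, fun _ _ => Or.inl ⟨rfl, rfl⟩⟩

lemma Sset_one (m' : ℕ) : Sset m' (1 : Equiv.Perm ℕ) = ∅ := by
  rw [Sset]
  apply Finset.filter_false_of_mem
  intro i hi
  rw [Finset.mem_Icc] at hi
  have : (1 : Equiv.Perm ℕ) (2*i - 1) = 2*i - 1 := rfl
  omega

lemma mobius_core (hn : n = 2*m' ∨ n = 2*m' + 1) (hm : 1 ≤ m')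
    (μ : Equiv.Perm ℕ → Equiv.Perm ℕ → ℤ)
    (hrefl : ∀ x, IsWachs n x → μ x x = 1)
    (hrec : ∀ x y, IsWachs n x → IsWachs n y → bruhatLT n x y →
      (∑ᶠ z ∈ {z : Equiv.Perm ℕ |
          IsWachs n z ∧ bruhatLE n x z ∧ bruhatLE n z y}, μ x z) = 0) :
    ∀ v, IsWachs n v →
      μ 1 v = if Bl n m' v then (-1 : ℤ)^(Sset m' v).card else 0 := by
  have hfin : ∀ v : Equiv.Perm ℕ, {z : Equiv.Perm ℕ | IsWachs n z ∧ bruhatLE n z v}.Finite :=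
    fun v => (finite_permOn n).subset (fun z hz => hz.1.1)
  suffices key : ∀ N : ℕ, ∀ v, IsWachs n v → ((hfin v).toFinset).card ≤ N →
      μ 1 v = if Bl n m' v then (-1 : ℤ)^(Sset m' v).card else 0 by
    intro v hv
    exact key ((hfin v).toFinset).card v hv le_rfl
  intro N
  induction N with
  | zero =>
    intro v hv hcard
    exfalso
    have hvF : v ∈ (hfin v).toFinset := by
      rw [Set.Finite.mem_toFinset]; exact ⟨hv, ble_refl v⟩
    have := Finset.card_pos.mpr ⟨v, hvF⟩
    omega
  | succ N ih =>
    intro v hv hcard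
    by_cases hv1 : v = 1
    · subst hv1
      rw [if_pos (Bl_one hn), Sset_one, Finset.card_empty, pow_zero]
      exact hrefl 1 (one_isWachs n)
    · have hlt : bruhatLT n 1 v := ⟨one_ble hv.1, fun h => hv1 h.symm⟩
      have hsum := hrec 1 v (one_isWachs n) hv hlt
      have hSeq : {z : Equiv.Perm ℕ | IsWachs n z ∧ bruhatLE n 1 z ∧ bruhatLE n z v} =
          ↑((hfin v).toFinset) := by
        ext z
        rw [Set.Finite.coe_toFinset]
        constructor
        · rintro ⟨h1, _, h3⟩; exact ⟨h1, h3⟩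
        · rintro ⟨h1, h3⟩; exact ⟨h1, one_ble h1.1, h3⟩
      rw [hSeq, finsum_mem_coe_finset] at hsum
      have hvF : v ∈ (hfin v).toFinset := by
        rw [Set.Finite.mem_toFinset]; exact ⟨hv, ble_refl v⟩
      have hsplit : μ 1 v = -∑ z ∈ ((hfin v).toFinset).erase v, μ 1 z := by
        have h := Finset.add_sum_erase _ (μ 1) hvF
        rw [hsum] at h
        linarith
      have hIH : ∀ z ∈ ((hfin v).toFinset).erase v,
          μ 1 z = if Bl n m' z then (-1 : ℤ)^(Sset m' z).card else 0 := by
        intro z hz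
        rw [Finset.mem_erase, Set.Finite.mem_toFinset] at hz
        have hzv := hz.1
        have hzw := hz.2.1
        have hzle := hz.2.2
        apply ih z hzw
        have hsub : (hfin z).toFinset ⊆ ((hfin v).toFinset).erase v := by
          intro y hy
          rw [Set.Finite.mem_toFinset] at hy
          rw [Finset.mem_erase, Set.Finite.mem_toFinset]
          refine ⟨?_, hy.1, ble_trans hy.2 hzle⟩
          rintro rfl
          exact hzv (ble_antisymm hzw.1 hv.1 hzle hy.2)
        have h1 := Finset.card_le_card hsub
        have h2 : (((hfin v).toFinset).erase v).card = ((hfin v).toFinset).card - 1 :=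
          Finset.card_erase_of_mem hvF
        omega
      rw [Finset.sum_congr rfl hIH, ← Finset.sum_filter] at hsplit
      have himage : (((hfin v).toFinset).erase v).filter (fun z => Bl n m' z) =
          ((Dset n m' v).powerset.filter (fun S => wB m' S ≠ v)).image (wB m') := by
        ext z
        constructor
        · intro hz
          rw [Finset.mem_filter, Finset.mem_erase, Set.Finite.mem_toFinset] at hz
          obtain ⟨⟨hzv, hzw, hzle⟩, hBl⟩ := hz
          rw [Finset.mem_image]
          refine ⟨Sset m' z, ?_, (Bl_eq_wB hn hBl).symm⟩
          rw [Finset.mem_filter, Finset.mem_powerset]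
          have hle' : bruhatLE n (wB m' (Sset m' z)) v := by
            rw [← Bl_eq_wB hn hBl]; exact hzle
          refine ⟨(wB_le_iff hn hv.1 (Sset_subset _ _)).mp hle', ?_⟩
          rw [← Bl_eq_wB hn hBl]
          exact hzv
        · intro hz
          rw [Finset.mem_image] at hz
          obtain ⟨S, hS, rfl⟩ := hz
          rw [Finset.mem_filter, Finset.mem_powerset] at hS
          have hSm : S ⊆ Finset.Icc 1 m' := subset_trans hS.1 (Dset_subset _ _ _)
          rw [Finset.mem_filter, Finset.mem_erase, Set.Finite.mem_toFinset]
          exact ⟨⟨hS.2, Bl_isWachs hn (Bl_wB hn S),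
            (wB_le_iff hn hv.1 hSm).mpr hS.1⟩, Bl_wB hn S⟩
      have hinj : ∀ S ∈ (Dset n m' v).powerset.filter (fun S => wB m' S ≠ v),
          ∀ T ∈ (Dset n m' v).powerset.filter (fun S => wB m' S ≠ v),
          wB m' S = wB m' T → S = T := by
        intro S hS T hT h
        rw [Finset.mem_filter, Finset.mem_powerset] at hS hT
        exact wB_inj (subset_trans hS.1 (Dset_subset _ _ _))
          (subset_trans hT.1 (Dset_subset _ _ _)) h
      rw [himage, Finset.sum_image hinj] at hsplit
      have hsummand : ∀ S ∈ (Dset n m' v).powerset.filter (fun S => wB m' S ≠ v),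
          ((-1 : ℤ)^(Sset m' (wB m' S)).card) = (-1 : ℤ)^S.card := by
        intro S hS
        rw [Finset.mem_filter, Finset.mem_powerset] at hS
        rw [Sset_wB (subset_trans hS.1 (Dset_subset _ _ _))]
      rw [Finset.sum_congr rfl hsummand] at hsplit
      by_cases hBv : Bl n m' v
      · have hveq := Bl_eq_wB hn hBv
        have hTm := Sset_subset m' v
        have hDT : Dset n m' v = Sset m' v := by
          conv_lhs => rw [hveq]
          exact Dset_wB hn hTm
        have hTne : Sset m' v ≠ ∅ := by
          intro h
          apply hv1
          rw [hveq, h, wB_empty]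
        have hfilter : (Dset n m' v).powerset.filter (fun S => wB m' S ≠ v) =
            (Sset m' v).powerset.erase (Sset m' v) := by
          rw [hDT]
          ext S
          rw [Finset.mem_filter, Finset.mem_powerset, Finset.mem_erase, Finset.mem_powerset]
          constructor
          · rintro ⟨h1, h2⟩
            refine ⟨?_, h1⟩
            rintro rfl
            exact h2 hveq.symm
          · rintro ⟨h1, h2⟩
            refine ⟨h2, ?_⟩
            intro hc
            apply h1
            apply wB_inj (subset_trans h2 hTm) hTm
            rw [hc]
            exact hveq
        rw [hfilter] at hsplit
        have hps : ∑ S ∈ (Sset m' v).powerset, (-1 : ℤ)^S.card = 0 :=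
          Finset.sum_powerset_neg_one_pow_card_of_nonempty
            (Finset.nonempty_iff_ne_empty.mpr hTne)
        have hTps : Sset m' v ∈ (Sset m' v).powerset := Finset.mem_powerset_self _
        have h := Finset.add_sum_erase _ (fun S => (-1 : ℤ)^S.card) hTps
        rw [hps] at h
        rw [if_pos hBv, hsplit]
        linarith
      · have hfilter : (Dset n m' v).powerset.filter (fun S => wB m' S ≠ v) =
            (Dset n m' v).powerset := by
          apply Finset.filter_true_of_mem
          intro S hS
          intro hc
          apply hBv
          rw [← hc]
          exact Bl_wB hn S
        rw [hfilter, Finset.sum_powerset_neg_one_pow_card_of_nonempty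
          (Dset_nonempty hn hm hv hv1)] at hsplit
        rw [if_neg hBv, hsplit]
        ring

end Part5

section Part6

variable {m : ℕ} {τ w v : Equiv.Perm ℕ} {T : Finset ℕ}

lemma tau_eq_one_of_blocks (hτ : PermOn m τ) (hphi : phiRel m τ T w)
    (hblk : ∀ i ∈ Finset.Icc 1 m, w (2*i - 1) = 2*i - 1 ∨ w (2*i - 1) = 2*i) :
    τ = 1 := by
  apply Equiv.ext
  intro i
  have hone : (1 : Equiv.Perm ℕ) i = i := rfl
  rw [hone]
  by_cases hi : i ∈ Finset.Icc 1 m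
  · have hp := hphi i hi
    have hb := hblk i hi
    have hmem := permOn_mapsTo hτ i hi
    rw [Finset.mem_Icc] at hmem hi
    by_cases hiT : i ∈ T
    · rw [if_pos hiT] at hp
      rcases hb with h | h <;> rw [hp.1] at h <;> omega
    · rw [if_neg hiT] at hp
      rcases hb with h | h <;> rw [hp.1] at h <;> omega
  · exact hτ i hi

lemma blocks_of_phi_one (hτ1 : τ = 1) (hphi : phiRel m τ T w) :
    ∀ i ∈ Finset.Icc 1 m,
      (w (2*i - 1) = 2*i - 1 ∧ w (2*i) = 2*i) ∨
      (w (2*i - 1) = 2*i ∧ w (2*i) = 2*i - 1) := by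
  subst hτ1
  intro i hi
  have hp := hphi i hi
  rw [show (1 : Equiv.Perm ℕ) i = i from rfl] at hp
  by_cases hiT : i ∈ T
  · rw [if_pos hiT] at hp
    exact Or.inr ⟨hp.1, hp.2⟩
  · rw [if_neg hiT] at hp
    exact Or.inl ⟨hp.1, hp.2⟩

lemma filter_eq_T (hphi : phiRel m τ T w) (hτ1 : τ = 1) (hT : T ⊆ Finset.Icc 1 m) :
    (Finset.Icc 1 m).filter (fun i => w (2*i - 1) = 2*i) = T := by
  subst hτ1
  ext i
  rw [Finset.mem_filter]
  constructor
  · rintro ⟨hi, hval⟩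
    have hp := hphi i hi
    rw [show (1 : Equiv.Perm ℕ) i = i from rfl] at hp
    by_contra hiT
    rw [if_neg hiT] at hp
    rw [Finset.mem_Icc] at hi
    rw [hp.1] at hval
    omega
  · intro hiT
    have hi := hT hiT
    have hp := hphi i hi
    rw [show (1 : Equiv.Perm ℕ) i = i from rfl, if_pos hiT] at hp
    exact ⟨hi, hp.1⟩

lemma Bl_fix_top {n m' : ℕ} {z : Equiv.Perm ℕ} (hno : n = 2*m' + 1) (hz : Bl n m' z) :
    z n = n := by
  have himg := Bl_image_even hz m' le_rfl
  have hmem : z n ∈ Finset.Icc 1 n :=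
    permOn_mapsTo hz.1 n (Finset.mem_Icc.mpr ⟨by omega, le_rfl⟩)
  have hnot : z n ∉ Finset.Icc 1 (2*m') := by
    intro hc
    rw [← himg] at hc
    obtain ⟨t, ht, htz⟩ := Finset.mem_image.mp hc
    have := z.injective htz
    rw [Finset.mem_Icc] at ht
    omega
  rw [Finset.mem_Icc] at hmem hnot
  omega

end Part6

/-- Proposition `moebius-odd`. For any function `μ` satisfying
the defining recurrence of the Möbius function of the poset `(W(S_n),≤)` of
Wachs permutations under Bruhat order: `μ(e,v) = (-1)^{|T|}` if `τ = e` (and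
`j = m+1` in the odd case) and `μ(e,v) = 0` otherwise. -/
theorem wachs_moebius (m : ℕ) (hm : 1 ≤ m) :
    -- odd case
    (∀ μ : Equiv.Perm ℕ → Equiv.Perm ℕ → ℤ,
      (∀ x, IsWachs (2*m+1) x → μ x x = 1) →
      (∀ x y, IsWachs (2*m+1) x → IsWachs (2*m+1) y → bruhatLT (2*m+1) x y →
        (∑ᶠ z ∈ {z : Equiv.Perm ℕ |
            IsWachs (2*m+1) z ∧ bruhatLE (2*m+1) x z ∧ bruhatLE (2*m+1) z y},
          μ x z) = 0) →
      ∀ v τ : Equiv.Perm ℕ, ∀ T : Finset ℕ, ∀ j : ℕ,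
        IsWachs (2*m+1) v → PermOn m τ → j ∈ Finset.Icc 1 (m+1) →
        T ⊆ Finset.Icc 1 m → phiOddRel m j τ T v →
        μ 1 v = if τ = 1 ∧ j = m + 1 then (-1 : ℤ) ^ T.card else 0) ∧
    -- even case
    (∀ μ : Equiv.Perm ℕ → Equiv.Perm ℕ → ℤ,
      (∀ x, IsWachs (2*m) x → μ x x = 1) →
      (∀ x y, IsWachs (2*m) x → IsWachs (2*m) y → bruhatLT (2*m) x y →
        (∑ᶠ z ∈ {z : Equiv.Perm ℕ |
            IsWachs (2*m) z ∧ bruhatLE (2*m) x z ∧ bruhatLE (2*m) z y},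
          μ x z) = 0) →
      ∀ v τ : Equiv.Perm ℕ, ∀ T : Finset ℕ,
        IsWachs (2*m) v → PermOn m τ → T ⊆ Finset.Icc 1 m → phiRel m τ T v →
        μ 1 v = if τ = 1 then (-1 : ℤ) ^ T.card else 0) := by
  constructor
  · -- odd case
    intro μ hrefl hrec v τ T j hv hτ hj hT hphi
    have hcore := mobius_core (n := 2*m+1) (m' := m) (Or.inr rfl) hm μ hrefl hrec v hv
    obtain ⟨hpos, w, hchi, hphiw⟩ := hphi
    rw [Finset.mem_Icc] at hj
    by_cases hcond : τ = 1 ∧ j = m + 1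
    · obtain ⟨hτ1, hjm⟩ := hcond
      have hposval : pos (2*m+1) v = 2*m+1 := by
        rw [hpos, hjm]
        omega
      have hweq : ∀ k ∈ Finset.Icc 1 (2*m), w k = v k := by
        intro k hk
        rw [Finset.mem_Icc] at hk
        have h := hchi.2 k (by rw [Finset.mem_Icc]; omega)
        rw [hposval, if_pos (by omega)] at h
        exact h
      have hBl : Bl (2*m+1) m v := by
        refine ⟨hv.1, ?_⟩
        intro i hi
        have hblockw := blocks_of_phi_one hτ1 hphiw i hi
        rw [Finset.mem_Icc] at hi
        rw [← hweq (2*i - 1) (Finset.mem_Icc.mpr ⟨by omega, by omega⟩),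
          ← hweq (2*i) (Finset.mem_Icc.mpr ⟨by omega, by omega⟩)]
        exact hblockw
      have hST : Sset m v = T := by
        rw [Sset, ← filter_eq_T hphiw hτ1 hT]
        apply Finset.filter_congr
        intro i hi
        rw [Finset.mem_Icc] at hi
        rw [hweq (2*i - 1) (Finset.mem_Icc.mpr ⟨by omega, by omega⟩)]
      rw [hcore, if_pos hBl, hST, if_pos ⟨hτ1, hjm⟩]
    · rw [hcore, if_neg ?hnb, if_neg hcond]
      case hnb =>
        intro hBl
        apply hcond
        have hfix : v (2*m+1) = 2*m+1 := Bl_fix_top rfl hBl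
        have hposval : pos (2*m+1) v = 2*m+1 := perm_inv_eq hfix
        have hjm : j = m + 1 := by
          rw [hposval] at hpos
          omega
        have hweq : ∀ k ∈ Finset.Icc 1 (2*m), w k = v k := by
          intro k hk
          rw [Finset.mem_Icc] at hk
          have h := hchi.2 k (by rw [Finset.mem_Icc]; omega)
          rw [hposval, if_pos (by omega)] at h
          exact h
        have hτ1 : τ = 1 := by
          apply tau_eq_one_of_blocks hτ hphiw
          intro i hi
          have hb := hBl.2 i hi
          rw [Finset.mem_Icc] at hi
          rw [hweq (2*i - 1) (Finset.mem_Icc.mpr ⟨by omega, by omega⟩)]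
          exact hb.imp And.left And.left
        exact ⟨hτ1, hjm⟩
  · -- even case
    intro μ hrefl hrec v τ T hv hτ hT hphi
    have hcore := mobius_core (n := 2*m) (m' := m) (Or.inl rfl) hm μ hrefl hrec v hv
    by_cases hτ1 : τ = 1
    · have hBl : Bl (2*m) m v := ⟨hv.1, blocks_of_phi_one hτ1 hphi⟩
      have hST : Sset m v = T := by
        rw [Sset]
        exact filter_eq_T hphi hτ1 hT
      rw [hcore, if_pos hBl, hST, if_pos hτ1]
    · rw [hcore, if_neg ?hnb2, if_neg hτ1]
      case hnb2 =>
        intro hBl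
        exact hτ1 (tau_eq_one_of_blocks hτ hphi
          (fun i hi => (hBl.2 i hi).imp And.left And.left))


end WachsPaper
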